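/- arXiv:1404.6877 — 3 statements merged into one kernel-verified Lean document; each statement's English description precedes it below -/
import Mathlib

section
/- Let A ∈ SL(2,ℤ) with tr A > 2 and let φ be an automorphism of Γ_A = ℤ² ⋊_A ℤ. Then φ maps the subgroup ℤ² × {0} onto itself, and φ(t) = (p, ε) for some p ∈ ℤ² and ε ∈ {1, −1}. Moreover, if ε = −1 and the automorphism of ℤ² induced by φ on ℤ² × {0} has determinant 1, then R(φ) = 4; in all other cases R(φ) is infinite. -/
/-- Two elements `x, y` of a group `G` are `φ`-twisted conjugate if
`y = g * x * (φ g)⁻¹` for some `g : G`. -/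
def twistedConj {G : Type*} [Group G] (φ : G →* G) (x y : G) : Prop :=
  ∃ g : G, y = g * x * (φ g)⁻¹

/-- The Reidemeister number of `φ` : the cardinality of the set of
`φ`-twisted conjugacy classes. -/
noncomputable def reidemeisterNumber {G : Type*} [Group G] (φ : G →* G) : Cardinal :=
  Cardinal.mk (Quot (twistedConj φ))

/-- The additive automorphism of `ℤ²` given by an invertible `2 × 2` integer matrix. -/
def mulVecAut (U : (Matrix (Fin 2) (Fin 2) ℤ)ˣ) : AddAut (Fin 2 → ℤ) where
  toFun v := (U : Matrix (Fin 2) (Fin 2) ℤ).mulVec v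
  invFun v := ((U⁻¹ : (Matrix (Fin 2) (Fin 2) ℤ)ˣ) : Matrix (Fin 2) (Fin 2) ℤ).mulVec v
  left_inv v := by
    simp only [Matrix.mulVec_mulVec, Units.inv_mul, Matrix.one_mulVec]
  right_inv v := by
    simp only [Matrix.mulVec_mulVec, Units.mul_inv, Matrix.one_mulVec]
  map_add' v w := Matrix.mulVec_add _ v w

/-- The semidirect product `ℤ² ⋊_U ℤ`, where `(x, m) * (y, n) = (x + U^m y, m + n)`. -/
abbrev GammaGrp (U : (Matrix (Fin 2) (Fin 2) ℤ)ˣ) :=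
  SemidirectProduct (Multiplicative (Fin 2 → ℤ)) (Multiplicative ℤ)
    (zpowersHom (MulAut (Multiplicative (Fin 2 → ℤ)))
      (AddEquiv.toMultiplicative (mulVecAut U)))

/-!
Write the elements of `Γ_A` as `(v, m)` and call `m` the level. The level-`0` subgroup `ℤ²` is the
isolator of `[Γ, Γ]`: `det (A - 1) • v` is the commutator of `t` with `adjugate (A - 1) v`, and
`det (A - 1) = 2 - tr A ≠ 0`. Hence `ℤ²` is characteristic, `φ` acts on it by an integer matrix
`P`, and on levels by `m ↦ ε m` with `ε = ±1`.

Twisted conjugation by `g` changes the level by `(1 - ε)` times the level of `g`. If `ε = 1` the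
level is an invariant, so `R(φ) = ∞`. If `ε = -1`, the level modulo `2` is the invariant, and at
level `n` twisted conjugacy is congruence modulo `(1 - Aⁿ P) ℤ²`. Applying `φ` to
`t (v, 0) t⁻¹ = (A v, 0)` gives `A P A = P`, which together with `tr A > 2` forces
`tr (Aⁿ P) = 0`, so `det (1 - Aⁿ P) = 1 + det P`. The index of `(1 - Aⁿ P) ℤ²` is therefore `2`
when `det P = 1`, giving `R(φ) = 2 + 2`, and infinite when `det P = -1`.
-/

open SemidirectProduct Multiplicative Matrix
open scoped commutatorElement

local notation "M₂" => Matrix (Fin 2) (Fin 2) ℤ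

namespace Matrix

variable {R : Type*} [CommRing R]

theorem mul_self_fin_two (X : Matrix (Fin 2) (Fin 2) R) :
    X * X = X.trace • X - X.det • 1 := by
  ext i j
  fin_cases i <;> fin_cases j <;>
    simp [mul_apply, trace_fin_two, det_fin_two, Fin.sum_univ_two] <;> ring

theorem det_one_sub_fin_two (X : Matrix (Fin 2) (Fin 2) R) :
    (1 - X).det = 1 - X.trace + X.det := by
  simp [det_fin_two, trace_fin_two]; ring

theorem two_mul_trace_eq_of_mul_mul_eq {A X : Matrix (Fin 2) (Fin 2) R} (hA : A.det = 1)
    (h : A * X * A = X) : 2 * X.trace = A.trace * (A * X).trace := by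
  have : X.trace = (X * (A * A)).trace := by
    conv_lhs => rw [← h]
    rw [Matrix.mul_assoc, trace_mul_comm, Matrix.mul_assoc]
  rw [mul_self_fin_two, hA, one_smul, Matrix.mul_sub, Matrix.mul_smul, Matrix.mul_one,
    trace_sub, trace_smul, smul_eq_mul, trace_mul_comm X A] at this
  linear_combination this

theorem trace_eq_zero_of_mul_mul_eq [IsDomain R] {A X : Matrix (Fin 2) (Fin 2) R}
    (hA : A.det = 1) (htr : A.trace ^ 2 ≠ 4) (h : A * X * A = X) : X.trace = 0 := by
  have hX := two_mul_trace_eq_of_mul_mul_eq hA h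
  have hAX := two_mul_trace_eq_of_mul_mul_eq (X := A * X) hA (by rw [Matrix.mul_assoc, h])
  rw [trace_mul_comm A (A * X), h] at hAX
  have : (A.trace ^ 2 - 4) * X.trace = 0 := by linear_combination (-2) * hX - A.trace * hAX
  exact (mul_eq_zero.mp this).resolve_left (sub_ne_zero.mpr htr)

variable {ι : Type*} [Fintype ι] [DecidableEq ι]

theorem det_coe_units_zpow_of_det_eq_one {U : (Matrix ι ι R)ˣ} (hU : (U : Matrix ι ι R).det = 1)
    (k : ℤ) : (↑(U ^ k) : Matrix ι ι R).det = 1 := by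
  have h : Units.map (detMonoidHom : Matrix ι ι R →* R) (U ^ k) = 1 := by
    rw [map_zpow, show Units.map detMonoidHom U = 1 from Units.ext hU, _root_.one_zpow]
  exact congrArg Units.val h

theorem natCard_quotient_range_mulVecLin {M : Matrix ι ι ℤ} (hM : M.det ≠ 0) :
    Nat.card ((ι → ℤ) ⧸ LinearMap.range M.mulVecLin) = M.det.natAbs := by
  have hinj : Function.Injective M.mulVecLin := fun v w hvw => by
    by_contra hne
    refine hM (exists_mulVec_eq_zero_iff.mp ⟨v - w, sub_ne_zero.mpr hne, ?_⟩)
    rw [mulVec_sub, sub_eq_zero]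
    exact hvw
  rw [← (LinearMap.range M.mulVecLin).natAbs_det_equiv (LinearEquiv.ofInjective _ hinj),
    ← LinearMap.det_toLin' M, toLin'_apply']
  rfl

theorem mk_quotient_range_mulVecLin {M : Matrix ι ι ℤ} (hM : M.det ≠ 0) :
    Cardinal.mk ((ι → ℤ) ⧸ LinearMap.range M.mulVecLin) = M.det.natAbs := by
  have hcard := natCard_quotient_range_mulVecLin hM
  have : Finite ((ι → ℤ) ⧸ LinearMap.range M.mulVecLin) :=
    Nat.finite_of_card_ne_zero (hcard ▸ Int.natAbs_ne_zero.mpr hM)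
  rw [← Nat.cast_card, hcard]

theorem infinite_quotient_range_mulVecLin {M : Matrix ι ι ℤ} (hM : M.det = 0) :
    Infinite ((ι → ℤ) ⧸ LinearMap.range M.mulVecLin) := by
  obtain ⟨u, hu, huM⟩ := exists_vecMul_eq_zero_iff.mpr hM
  refine Infinite.of_injective (fun k : ℤ => Submodule.Quotient.mk (k • u)) fun a b hab => ?_
  obtain ⟨x, hx⟩ := (Submodule.Quotient.eq _).mp hab
  have : (a - b) * (u ⬝ᵥ u) = 0 := by
    have := congrArg (u ⬝ᵥ ·) hx
    simp only [Matrix.mulVecLin_apply, dotProduct_mulVec, huM, zero_dotProduct, ← sub_smul,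
      dotProduct_smul, smul_eq_mul] at this
    exact this.symm
  exact sub_eq_zero.mp ((mul_eq_zero.mp this).resolve_right (dotProduct_self_eq_zero.not.mpr hu))

end Matrix

theorem twistedConj_equivalence {G : Type*} [Group G] (f : G →* G) :
    Equivalence (twistedConj f) where
  refl x := ⟨1, by simp⟩
  symm := by
    rintro x y ⟨g, rfl⟩
    exact ⟨g⁻¹, by simp [mul_assoc]⟩
  trans := by
    rintro x y z ⟨g, rfl⟩ ⟨h, rfl⟩
    exact ⟨h * g, by simp [mul_assoc]⟩

theorem quot_mk_eq_iff_twistedConj {G : Type*} [Group G] {f : G →* G} {x y : G} :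
    Quot.mk (twistedConj f) x = Quot.mk (twistedConj f) y ↔ twistedConj f x y :=
  Quot.eq.trans (twistedConj_equivalence f).eqvGen_iff

namespace GammaGrp

variable {U : (M₂)ˣ}

def of (v : Fin 2 → ℤ) (m : ℤ) : GammaGrp U := ⟨ofAdd v, ofAdd m⟩

def level (g : GammaGrp U) : ℤ := toAdd g.right

theorem act_ofAdd (m : ℤ) (w : Fin 2 → ℤ) :
    zpowersHom _ (AddEquiv.toMultiplicative (mulVecAut U)) (ofAdd m) (ofAdd w)
      = ofAdd ((↑(U ^ m) : M₂) *ᵥ w) := by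
  let toAut : (M₂)ˣ →* MulAut (Multiplicative (Fin 2 → ℤ)) :=
    MonoidHom.mk' (fun V => AddEquiv.toMultiplicative (mulVecAut V)) fun V W =>
      MulEquiv.ext fun v =>
        show ofAdd (↑(V * W) *ᵥ toAdd v) = ofAdd ((V : M₂) *ᵥ (W : M₂) *ᵥ toAdd v) by
          rw [Units.val_mul, mulVec_mulVec]
  change (toAut U ^ m) (ofAdd w) = _
  rw [← map_zpow]
  rfl

theorem of_mul_of (v w : Fin 2 → ℤ) (m n : ℤ) :
    (of v m * of w n : GammaGrp U) = of (v + (↑(U ^ m) : M₂) *ᵥ w) (m + n) := by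
  rw [of, of, SemidirectProduct.mul_def, act_ofAdd]
  rfl

@[simp] theorem of_zero_zero : (of 0 0 : GammaGrp U) = 1 := rfl

theorem of_inv (v : Fin 2 → ℤ) (m : ℤ) :
    (of v m : GammaGrp U)⁻¹ = of (-((↑(U ^ (-m)) : M₂) *ᵥ v)) (-m) := by
  rw [eq_comm, eq_inv_iff_mul_eq_one, of_mul_of, neg_add_cancel, neg_add_cancel, of_zero_zero]

theorem of_inj {v w : Fin 2 → ℤ} {m n : ℤ} : (of v m : GammaGrp U) = of w n ↔ v = w ∧ m = n := by
  simp [of, SemidirectProduct.ext_iff]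

@[simp] theorem of_left_level (g : GammaGrp U) : of (toAdd g.left) (level g) = g := rfl

@[simp] theorem level_of (v : Fin 2 → ℤ) (m : ℤ) : level (of v m : GammaGrp U) = m := rfl

@[simp] theorem level_mul (g h : GammaGrp U) : level (g * h) = level g + level h := rfl

@[simp] theorem level_inv (g : GammaGrp U) : level g⁻¹ = -level g := rfl

@[simp] theorem level_zpow (g : GammaGrp U) (k : ℤ) : level (g ^ k) = k * level g := by
  change toAdd (rightHom (g ^ k)) = _
  rw [map_zpow, toAdd_zpow, smul_eq_mul]
  rfl

theorem inl_ofAdd (v : Fin 2 → ℤ) : (inl (ofAdd v) : GammaGrp U) = of v 0 := rfl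

theorem inr_ofAdd (m : ℤ) : (inr (ofAdd m) : GammaGrp U) = of 0 m := rfl

theorem of_zero_zpow (v : Fin 2 → ℤ) (k : ℤ) : (of v 0 : GammaGrp U) ^ k = of (k • v) 0 := by
  rw [← inl_ofAdd, ← map_zpow, ← ofAdd_zsmul]
  rfl

theorem of_zero_mul_of_zero (v w : Fin 2 → ℤ) : (of v 0 * of w 0 : GammaGrp U) = of (v + w) 0 := by
  rw [← inl_ofAdd, ← inl_ofAdd, ← map_mul]
  rfl

theorem commutatorElement_of (w : Fin 2 → ℤ) :
    ⁅(of 0 1 : GammaGrp U), (of w 0 : GammaGrp U)⁆ = of (((U : M₂) - 1) *ᵥ w) 0 := by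
  simp only [commutatorElement_def, of_inv, of_mul_of, of_inj]
  refine ⟨?_, by ring⟩
  simp only [add_zero, neg_zero, zpow_zero, zpow_one, add_neg_cancel, Units.val_one, one_mulVec,
    mulVec_zero, mulVec_neg, zero_add, sub_mulVec, ← sub_eq_add_neg]

theorem mem_range_inl_iff_level_eq_zero {g : GammaGrp U} :
    g ∈ (inl : Multiplicative (Fin 2 → ℤ) →* GammaGrp U).range ↔ level g = 0 := by
  rw [range_inl_eq_ker_rightHom, MonoidHom.mem_ker]
  exact toAdd_eq_zero.symm

theorem level_eq_zero_of_mem_commutator {g : GammaGrp U} (hg : g ∈ commutator (GammaGrp U)) :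
    level g = 0 :=
  toAdd_eq_zero.mpr (Abelianization.commutator_subset_ker rightHom hg)

theorem of_zero_one_zpow (m : ℤ) : (of 0 1 : GammaGrp U) ^ m = of 0 m := by
  rw [← inr_ofAdd, ← map_zpow, ← ofAdd_zsmul, smul_eq_mul, mul_one]
  rfl

theorem of_eq_of_zero_mul (v : Fin 2 → ℤ) (m : ℤ) : (of v m : GammaGrp U) = of v 0 * of 0 m := by
  rw [of_mul_of, mulVec_zero, add_zero, zero_add]

theorem of_mul_of_zero_mul_of_inv (p w : Fin 2 → ℤ) (m : ℤ) :
    (of p m * of w 0 * (of p m)⁻¹ : GammaGrp U) = of (↑(U ^ m) *ᵥ w) 0 := by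
  rw [of_inv, of_mul_of, of_mul_of, of_inj]
  refine ⟨?_, by ring⟩
  rw [add_zero, mulVec_neg, mulVec_mulVec, ← Units.val_mul, ← _root_.zpow_add, add_neg_cancel,
    zpow_zero, Units.val_one, one_mulVec, add_neg_cancel_comm]

/-- The matrix `[ψ]` of the restriction of `ψ` to `ℤ²`. -/
def inducedMatrix (ψ : GammaGrp U ≃* GammaGrp U) : M₂ :=
  Matrix.of fun i j => toAdd (ψ (of (Pi.single j 1) 0)).left i

/-- The `ε` of `ψ t = (p, ε)`. -/
def eps (ψ : GammaGrp U ≃* GammaGrp U) : ℤ := level (ψ (of 0 1))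

def twistedRange (ψ : GammaGrp U ≃* GammaGrp U) (n : ℤ) : Submodule ℤ (Fin 2 → ℤ) :=
  LinearMap.range (1 - (↑(U ^ n) : M₂) * inducedMatrix ψ).mulVecLin

variable (hU : ((U : M₂) - 1).det ≠ 0) (ψ : GammaGrp U ≃* GammaGrp U)
include hU

theorem mem_range_inl_iff {g : GammaGrp U} :
    g ∈ (inl : Multiplicative (Fin 2 → ℤ) →* GammaGrp U).range ↔
      ∃ k : ℤ, k ≠ 0 ∧ g ^ k ∈ commutator (GammaGrp U) := by
  constructor
  · rintro ⟨v, rfl⟩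
    refine ⟨((U : M₂) - 1).det, hU, ?_⟩
    have hcomm : ((U : M₂) - 1).det • toAdd v
        = ((U : M₂) - 1) *ᵥ (adjugate ((U : M₂) - 1) *ᵥ toAdd v) := by
      rw [mulVec_mulVec, mul_adjugate, smul_mulVec, one_mulVec]
    change (of (toAdd v) 0 : GammaGrp U) ^ _ ∈ _
    rw [of_zero_zpow, hcomm, ← commutatorElement_of]
    exact Subgroup.commutator_mem_commutator (Subgroup.mem_top _) (Subgroup.mem_top _)
  · rintro ⟨k, hk, hgk⟩
    have := level_eq_zero_of_mem_commutator hgk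
    rw [level_zpow, mul_eq_zero] at this
    exact mem_range_inl_iff_level_eq_zero.mpr (this.resolve_left hk)

theorem apply_mem_range_inl {g : GammaGrp U}
    (hg : g ∈ (inl : Multiplicative (Fin 2 → ℤ) →* GammaGrp U).range) :
    ψ g ∈ (inl : Multiplicative (Fin 2 → ℤ) →* GammaGrp U).range := by
  obtain ⟨k, hk, hgk⟩ := (mem_range_inl_iff hU).mp hg
  refine (mem_range_inl_iff hU).mpr ⟨k, hk, ?_⟩
  rw [← map_zpow]
  exact Subgroup.characteristic_iff_map_le.mp inferInstance ψ ⟨_, hgk, rfl⟩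

theorem map_range_inl :
    (inl : Multiplicative (Fin 2 → ℤ) →* GammaGrp U).range.map ψ.toMonoidHom
      = (inl : Multiplicative (Fin 2 → ℤ) →* GammaGrp U).range := by
  refine le_antisymm ?_ fun g hg => ⟨ψ.symm g, apply_mem_range_inl hU ψ.symm hg, by simp⟩
  rintro _ ⟨g, hg, rfl⟩
  exact apply_mem_range_inl hU ψ hg

theorem level_apply_of_zero (v : Fin 2 → ℤ) : level (ψ (of v 0)) = 0 :=
  mem_range_inl_iff_level_eq_zero.mp (apply_mem_range_inl hU ψ ⟨ofAdd v, rfl⟩)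

theorem apply_of_zero (v : Fin 2 → ℤ) : ψ (of v 0) = of (inducedMatrix ψ *ᵥ v) 0 := by
  have hψ : ∀ v, ψ (of v 0) = of (toAdd (ψ (of v 0)).left) 0 := fun v => by
    conv_lhs => rw [← of_left_level (ψ (of v 0)), level_apply_of_zero hU]
  let L : (Fin 2 → ℤ) →+ (Fin 2 → ℤ) := AddMonoidHom.mk' (fun v => toAdd (ψ (of v 0)).left)
    fun v w => by
      have h := map_mul ψ (of v 0) (of w 0)
      rw [of_zero_mul_of_zero, hψ, hψ v, hψ w, of_zero_mul_of_zero, of_inj] at h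
      exact h.1
  have hL : inducedMatrix ψ = LinearMap.toMatrix' L.toIntLinearMap := by
    ext i j
    rw [LinearMap.toMatrix'_apply]
    rfl
  rw [hL, LinearMap.toMatrix'_mulVec, hψ]
  rfl

theorem level_apply (g : GammaGrp U) : level (ψ g) = eps ψ * level g := by
  conv_lhs => rw [← of_left_level g, of_eq_of_zero_mul, map_mul, level_mul,
    level_apply_of_zero hU, ← of_zero_one_zpow, map_zpow, level_zpow]
  rw [eps]
  ring

theorem eps_eq_one_or_neg_one : eps ψ = 1 ∨ eps ψ = -1 := by
  have h := level_apply hU ψ (ψ.symm (of 0 1))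
  rw [MulEquiv.apply_symm_apply, level_of] at h
  exact Int.eq_one_or_neg_one_of_mul_eq_one h.symm

theorem det_inducedMatrix_eq_one_or_neg_one :
    (inducedMatrix ψ).det = 1 ∨ (inducedMatrix ψ).det = -1 := by
  have h : inducedMatrix ψ * inducedMatrix ψ.symm = 1 := ext_iff_mulVec.mpr fun v => by
    have := apply_of_zero hU ψ (inducedMatrix ψ.symm *ᵥ v)
    rw [← apply_of_zero hU ψ.symm, MulEquiv.apply_symm_apply, of_inj] at this
    rw [one_mulVec, ← mulVec_mulVec]
    exact this.1.symm
  exact Int.eq_one_or_neg_one_of_mul_eq_one (by rw [← det_mul, h, det_one])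

theorem level_twist (g x : GammaGrp U) :
    level (g * x * (ψ.toMonoidHom g)⁻¹) = level x + (1 - eps ψ) * level g := by
  rw [MulEquiv.coe_toMonoidHom, level_mul, level_mul, level_inv, level_apply hU]
  ring

theorem of_zero_twist (x a : Fin 2 → ℤ) (n : ℤ) :
    of x 0 * of a n * (ψ.toMonoidHom (of x 0))⁻¹
      = of (a + (1 - (↑(U ^ n) : M₂) * inducedMatrix ψ) *ᵥ x) n := by
  rw [MulEquiv.coe_toMonoidHom, apply_of_zero hU, of_inv, of_mul_of, of_mul_of, of_inj]
  refine ⟨?_, by ring⟩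
  simp only [zpow_zero, Units.val_one, one_mulVec, Matrix.one_mul, neg_zero, mulVec_neg,
    mulVec_mulVec, sub_mulVec, zero_add]
  abel

theorem aleph0_le_reidemeisterNumber_of_eps_eq_one (hε : eps ψ = 1) :
    Cardinal.aleph0 ≤ reidemeisterNumber ψ.toMonoidHom := by
  rw [← Cardinal.mk_int]
  refine Cardinal.mk_le_of_injective (f := fun m : ℤ => Quot.mk _ (of 0 m)) fun a b hab => ?_
  obtain ⟨g, hg⟩ := quot_mk_eq_iff_twistedConj.mp hab
  simpa [hε] using (level_twist hU ψ g (of 0 a)).symm.trans (congrArg level hg).symm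

section eps_eq_neg_one

variable (hε : eps ψ = -1)
include hε

theorem mul_inducedMatrix_mul : (U : M₂) * inducedMatrix ψ * U = inducedMatrix ψ := by
  refine ext_iff_mulVec.mpr fun v => ?_
  have h := congrArg ψ (of_mul_of_zero_mul_of_inv 0 v 1)
  rw [map_mul, map_mul, map_inv, apply_of_zero hU, apply_of_zero hU, ← of_left_level (ψ (of 0 1)),
    ← eps, hε, of_mul_of_zero_mul_of_inv, of_inj, zpow_one, _root_.zpow_neg_one] at h
  calc ((U : M₂) * inducedMatrix ψ * (U : M₂)) *ᵥ v
        = (U : M₂) *ᵥ inducedMatrix ψ *ᵥ (U : M₂) *ᵥ v := by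
          simp only [mulVec_mulVec, Matrix.mul_assoc]
    _ = (U : M₂) *ᵥ (↑U⁻¹ : M₂) *ᵥ inducedMatrix ψ *ᵥ v := by rw [h.1]
    _ = inducedMatrix ψ *ᵥ v := by rw [mulVec_mulVec, Units.mul_inv, one_mulVec]

theorem trace_zpow_mul_inducedMatrix (hdet : (U : M₂).det = 1) (htr : (U : M₂).trace ^ 2 ≠ 4)
    (n : ℤ) : ((↑(U ^ n) : M₂) * inducedMatrix ψ).trace = 0 := by
  refine trace_eq_zero_of_mul_mul_eq hdet htr ?_
  calc (U : M₂) * (↑(U ^ n) * inducedMatrix ψ) * (U : M₂)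
      = ↑(U ^ n) * ((U : M₂) * inducedMatrix ψ * (U : M₂)) := by
        rw [← Matrix.mul_assoc, ← Units.val_mul, (Commute.self_zpow U n).eq, Units.val_mul]
        simp only [Matrix.mul_assoc]
    _ = ↑(U ^ n) * inducedMatrix ψ := by rw [mul_inducedMatrix_mul hU ψ hε]

theorem det_one_sub_zpow_mul_inducedMatrix (hdet : (U : M₂).det = 1)
    (htr : (U : M₂).trace ^ 2 ≠ 4) (n : ℤ) :
    (1 - (↑(U ^ n) : M₂) * inducedMatrix ψ).det = 1 + (inducedMatrix ψ).det := by
  rw [det_one_sub_fin_two, trace_zpow_mul_inducedMatrix hU ψ hε hdet htr, det_mul,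
    det_coe_units_zpow_of_det_eq_one hdet, one_mul, sub_zero]

theorem twistedConj_of_of_iff {a c : Fin 2 → ℤ} {n : ℤ} :
    twistedConj ψ.toMonoidHom (of a n) (of c n) ↔ c - a ∈ twistedRange ψ n := by
  constructor
  · rintro ⟨g, hg⟩
    have hg0 : level g = 0 := by
      have := congrArg level hg
      rw [level_twist hU, hε, level_of, level_of] at this
      linarith
    rw [← of_left_level g, hg0, of_zero_twist hU, of_inj] at hg
    exact ⟨toAdd g.left, by rw [hg.1, mulVecLin_apply, add_sub_cancel_left]⟩
  · rintro ⟨x, hx⟩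
    refine ⟨of x 0, ?_⟩
    rw [of_zero_twist hU, of_inj, ← mulVecLin_apply, hx, add_sub_cancel]
    exact ⟨rfl, rfl⟩

theorem level_emod_two_of_twistedConj {x y : GammaGrp U} (h : twistedConj ψ.toMonoidHom x y) :
    level y % 2 = level x % 2 := by
  obtain ⟨g, rfl⟩ := h
  rw [level_twist hU, hε]
  omega

theorem exists_twistedConj_of_level_emod_two (x : GammaGrp U) :
    ∃ v, twistedConj ψ.toMonoidHom x (of v (level x % 2)) := by
  set y := of 0 (-(level x / 2)) * x * (ψ.toMonoidHom (of 0 (-(level x / 2))))⁻¹ with hy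
  have hlevel : level y = level x % 2 := by
    rw [hy, level_twist hU, hε, level_of]
    omega
  refine ⟨toAdd y.left, ?_⟩
  rw [← hlevel, of_left_level]
  exact ⟨_, hy⟩

theorem quot_mk_of_eq_quot_mk_of_iff (n : ℤ) (a c : Fin 2 → ℤ) :
    Quot.mk (twistedConj ψ.toMonoidHom) (of a n) = Quot.mk _ (of c n) ↔
      Submodule.Quotient.mk (p := twistedRange ψ n) a = Submodule.Quotient.mk c := by
  rw [quot_mk_eq_iff_twistedConj, twistedConj_of_of_iff hU ψ hε, Submodule.Quotient.eq,
    ← neg_mem_iff, neg_sub]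

theorem reidemeisterNumber_eq_add : reidemeisterNumber ψ.toMonoidHom
    = Cardinal.mk ((Fin 2 → ℤ) ⧸ twistedRange ψ 0)
      + Cardinal.mk ((Fin 2 → ℤ) ⧸ twistedRange ψ 1) := by
  have hclass := quot_mk_of_eq_quot_mk_of_iff hU ψ hε
  let classAt (n : ℤ) : (Fin 2 → ℤ) ⧸ twistedRange ψ n → Quot (twistedConj ψ.toMonoidHom) :=
    Quotient.lift (fun v => Quot.mk _ (of v n)) fun a c h => (hclass n a c).mpr (Quotient.sound h)
  have hinj : Function.Injective (Sum.elim (classAt 0) (classAt 1)) := by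
    have hparity (a c : Fin 2 → ℤ) :
        Quot.mk (twistedConj ψ.toMonoidHom) (of a 0) ≠ Quot.mk _ (of c 1) := fun h => by
      simpa using level_emod_two_of_twistedConj hU ψ hε (quot_mk_eq_iff_twistedConj.mp h)
    rintro (a | a) (c | c) h <;>
      induction a using Submodule.Quotient.induction_on with | H a => ?_ <;>
      induction c using Submodule.Quotient.induction_on with | H c => ?_
    · exact congrArg Sum.inl ((hclass 0 a c).mp h)
    · exact absurd h (hparity a c)
    · exact absurd h.symm (hparity c a)
    · exact congrArg Sum.inr ((hclass 1 a c).mp h)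
  have hsurj : Function.Surjective (Sum.elim (classAt 0) (classAt 1)) := by
    rintro ⟨x⟩
    obtain ⟨v, hv⟩ := exists_twistedConj_of_level_emod_two hU ψ hε x
    rw [← quot_mk_eq_iff_twistedConj] at hv
    rcases Int.emod_two_eq (level x) with h | h <;> rw [h] at hv
    · exact ⟨.inl (Submodule.Quotient.mk v), hv.symm⟩
    · exact ⟨.inr (Submodule.Quotient.mk v), hv.symm⟩
  rw [reidemeisterNumber, Cardinal.add_def, Cardinal.mk_congr (Equiv.ofBijective _ ⟨hinj, hsurj⟩)]

variable (hdet : (U : M₂).det = 1) (htr : (U : M₂).trace ^ 2 ≠ 4)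
include hdet htr

theorem mk_quotient_twistedRange_of_det_eq_one (hP : (inducedMatrix ψ).det = 1) (n : ℤ) :
    Cardinal.mk ((Fin 2 → ℤ) ⧸ twistedRange ψ n) = 2 := by
  have hdet2 : (1 - (↑(U ^ n) : M₂) * inducedMatrix ψ).det = 2 := by
    rw [det_one_sub_zpow_mul_inducedMatrix hU ψ hε hdet htr, hP, one_add_one_eq_two]
  rw [twistedRange, mk_quotient_range_mulVecLin (hdet2 ▸ two_ne_zero), hdet2]
  rfl

theorem reidemeisterNumber_eq_four (hP : (inducedMatrix ψ).det = 1) :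
    reidemeisterNumber ψ.toMonoidHom = 4 := by
  rw [reidemeisterNumber_eq_add hU ψ hε,
    mk_quotient_twistedRange_of_det_eq_one hU ψ hε hdet htr hP,
    mk_quotient_twistedRange_of_det_eq_one hU ψ hε hdet htr hP]
  norm_num

theorem aleph0_le_reidemeisterNumber_of_det_eq_neg_one (hP : (inducedMatrix ψ).det = -1) :
    Cardinal.aleph0 ≤ reidemeisterNumber ψ.toMonoidHom := by
  have : Infinite ((Fin 2 → ℤ) ⧸ twistedRange ψ 0) := infinite_quotient_range_mulVecLin (by
    rw [det_one_sub_zpow_mul_inducedMatrix hU ψ hε hdet htr, hP, add_neg_cancel])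
  rw [reidemeisterNumber_eq_add hU ψ hε]
  exact (Cardinal.aleph0_le_mk _).trans le_self_add

end eps_eq_neg_one

theorem aleph0_le_reidemeisterNumber (hdet : (U : M₂).det = 1) (htr : (U : M₂).trace ^ 2 ≠ 4)
    (h : ¬(eps ψ = -1 ∧ (inducedMatrix ψ).det = 1)) :
    Cardinal.aleph0 ≤ reidemeisterNumber ψ.toMonoidHom := by
  rcases eps_eq_one_or_neg_one hU ψ with hε | hε
  · exact aleph0_le_reidemeisterNumber_of_eps_eq_one hU ψ hε
  · exact aleph0_le_reidemeisterNumber_of_det_eq_neg_one hU ψ hε hdet htr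
      ((det_inducedMatrix_eq_one_or_neg_one hU ψ).resolve_left fun hP => h ⟨hε, hP⟩)

end GammaGrp

/-- for `A ∈ SL(2,ℤ)` with `tr A > 2`, every automorphism `φ` of
`Γ_A = ℤ² ⋊_A ℤ` maps `ℤ² × {0}` onto itself, `φ(t) = (p, ε)` with `ε = ±1`; moreover
`R(φ) = 4` when `ε = -1` and the induced automorphism of `ℤ²` has determinant `1`,
and `R(φ)` is infinite otherwise. -/
theorem stmt0 (U : (Matrix (Fin 2) (Fin 2) ℤ)ˣ)
    (hdet : (U : Matrix (Fin 2) (Fin 2) ℤ).det = 1)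
    (htr : 2 < (U : Matrix (Fin 2) (Fin 2) ℤ).trace)
    (φ : GammaGrp U ≃* GammaGrp U) :
    Subgroup.map φ.toMonoidHom (SemidirectProduct.inl :
        Multiplicative (Fin 2 → ℤ) →* GammaGrp U).range
      = (SemidirectProduct.inl : Multiplicative (Fin 2 → ℤ) →* GammaGrp U).range ∧
    ∃ (P : Matrix (Fin 2) (Fin 2) ℤ) (p : Fin 2 → ℤ) (ε : ℤ),
      (ε = 1 ∨ ε = -1) ∧
      (∀ v : Fin 2 → ℤ,
        φ (SemidirectProduct.inl (Multiplicative.ofAdd v))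
          = SemidirectProduct.inl (Multiplicative.ofAdd (P.mulVec v))) ∧
      φ (SemidirectProduct.inr (Multiplicative.ofAdd (1 : ℤ)))
        = SemidirectProduct.inl (Multiplicative.ofAdd p)
            * SemidirectProduct.inr (Multiplicative.ofAdd ε) ∧
      ((ε = -1 ∧ P.det = 1) → reidemeisterNumber φ.toMonoidHom = 4) ∧
      (¬(ε = -1 ∧ P.det = 1) → Cardinal.aleph0 ≤ reidemeisterNumber φ.toMonoidHom) := by
  have hU : ((U : M₂) - 1).det ≠ 0 := by
    rw [← neg_sub, det_neg, det_one_sub_fin_two, hdet]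
    norm_num
    omega
  have htr4 : (U : M₂).trace ^ 2 ≠ 4 := by nlinarith
  open GammaGrp in
  exact ⟨map_range_inl hU φ, inducedMatrix φ, toAdd (φ (of 0 1)).left, eps φ,
    eps_eq_one_or_neg_one hU φ, apply_of_zero hU φ, (inl_left_mul_inr_right _).symm,
    fun ⟨hε, hP⟩ => reidemeisterNumber_eq_four hU φ hε hdet htr4 hP,
    aleph0_le_reidemeisterNumber hU φ hdet htr4⟩
end

section
/- Let N ∈ GL(2,ℤ) with det N = −1 and tr N ≠ 0. Then the group Π₂⁻ = ℤ² ⋊_N ℤ has the R_∞ property: for every automorphism φ of Π₂⁻, the number of φ-twisted conjugacy classes is infinite. -/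
/-!
Every homomorphism `ℤ² ⋊_N ℤ → ℤ` kills `ℤ²`, since `det (N - 1) = -tr N ≠ 0`.
Hence an automorphism `φ` preserves `ℤ²` and induces `±1` on the quotient `ℤ`.
Inducing `-1` is impossible: the restriction of `φ` to `ℤ²` would then conjugate
`N` to `N⁻¹`, while `tr N⁻¹ = -tr N` for `det N = -1`. So `φ` commutes with the
projection onto `ℤ`, which is therefore constant on `φ`-twisted conjugacy classes;
being surjective, it shows there are infinitely many of them.
-/

open SemidirectProduct Multiplicative Matrix

theorem aleph0_le_reidemeisterNumber_of_comp_eq {G H : Type*} [Group G] [CommGroup H]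
    [Infinite H]
    (φ : G →* G) (f : G →* H) (hf : Function.Surjective f) (hφ : f.comp φ = f) :
    Cardinal.aleph0 ≤ reidemeisterNumber φ := by
  have hconst : ∀ x y, twistedConj φ x y → f x = f y := by
    rintro x y ⟨g, rfl⟩
    rw [map_mul, map_mul, map_inv, ← MonoidHom.comp_apply f φ, hφ, mul_inv_cancel_comm]
  have : Infinite (Quot (twistedConj φ)) :=
    .of_surjective (Quot.lift f hconst) (hf.of_comp (g := Quot.mk _))
  exact Cardinal.aleph0_le_mk _

namespace Matrix

theorem det_sub_one_fin_two {R : Type*} [CommRing R] (A : Matrix (Fin 2) (Fin 2) R) :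
    (A - 1).det = A.det - A.trace + 1 := by
  simp only [det_fin_two, trace_fin_two, Matrix.sub_apply, one_apply_eq, one_apply_ne, ne_eq,
    zero_ne_one, one_ne_zero, not_false_eq_true, sub_zero]
  ring

theorem trace_inv_fin_two_of_det_eq_neg_one {R : Type*} [CommRing R]
    {A : Matrix (Fin 2) (Fin 2) R} (hA : A.det = -1) : A⁻¹.trace = -A.trace := by
  have hinv : Ring.inverse (-1 : R) = -1 := by simpa using Ring.inverse_unit (-1 : Rˣ)
  rw [inv_def, hA, hinv, trace_smul, adjugate_fin_two, trace_fin_two_of,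
    trace_fin_two]
  simp [add_comm]

theorem trace_eq_of_mulVec_semiconj {R n : Type*} [CommRing R] [Fintype n] [DecidableEq n]
    {A B : Matrix n n R} (e : (n → R) ≃ₗ[R] (n → R)) (h : ∀ x, e (A *ᵥ x) = B *ᵥ e x) :
    A.trace = B.trace := by
  have hconj : toLin' B = e.conj (toLin' A) := by
    refine LinearMap.ext fun x ↦ ?_
    simp [LinearEquiv.conj_apply, h]
  rw [← trace_toLin'_eq, ← trace_toLin'_eq, hconj, LinearMap.trace_conj']

end Matrix

theorem LinearMap.eq_zero_of_map_mulVec_eq {R M n : Type*} [CommRing R] [IsDomain R]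
    [AddCommGroup M] [Module R M] [Module.IsTorsionFree R M] [Fintype n] [DecidableEq n]
    {A : Matrix n n R} (hA : (A - 1).det ≠ 0) {L : (n → R) →ₗ[R] M}
    (hL : ∀ x, L (A *ᵥ x) = L x) : L = 0 := by
  refine LinearMap.ext fun x ↦ ?_
  have hrange : ∀ y, L ((A - 1) *ᵥ y) = 0 := fun y ↦ by
    rw [sub_mulVec, one_mulVec, map_sub, hL, sub_self]
  have hdet : (A - 1).det • x = (A - 1) *ᵥ ((A - 1).adjugate *ᵥ x) := by
    rw [mulVec_mulVec, mul_adjugate, smul_mulVec, one_mulVec]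
  have := hrange ((A - 1).adjugate *ᵥ x)
  rwa [← hdet, map_smul, smul_eq_zero_iff_right hA] at this

namespace SemidirectProduct

variable {N G : Type*} [Group G]

theorem mul_inl_mul_inv [CommGroup N] {ψ : G →* MulAut N} (h : N ⋊[ψ] G) (n : N) :
    h * inl n * h⁻¹ = inl (ψ h.right n) := by
  ext <;> simp [mul_comm, mul_left_comm]

variable [Group N] {ψ : G →* MulAut N}

theorem map_inl_aut {H : Type*} [CommGroup H] (f : N ⋊[ψ] G →* H) (g : G) (n : N) :
    f (inl (ψ g n)) = f (inl n) := by
  rw [inl_aut, map_mul, map_mul, map_inv, map_inv, mul_inv_cancel_comm]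

theorem map_eq_map_inr_right {H : Type*} [Group H] {f : N ⋊[ψ] G →* H}
    (hf : ∀ n, f (inl n) = 1) (g : N ⋊[ψ] G) : f g = f (inr g.right) := by
  conv_lhs => rw [← inl_left_mul_inr_right g]
  rw [map_mul, hf, one_mul]

theorem exists_mulEquiv_map_inl (φ : N ⋊[ψ] G ≃* N ⋊[ψ] G)
    (h : ∀ n, (φ (inl n)).right = 1) (h' : ∀ n, (φ.symm (inl n)).right = 1) :
    ∃ e : N ≃* N, ∀ n, φ (inl n) = inl (e n) := by
  have inl_left : ∀ g : N ⋊[ψ] G, g.right = 1 → inl g.left = g := fun g hg ↦ by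
    ext <;> simp [hg]
  refine ⟨{ toFun n := (φ (inl n)).left
            invFun n := (φ.symm (inl n)).left
            left_inv n := by simp [inl_left _ (h n)]
            right_inv n := by simp [inl_left _ (h' n)]
            map_mul' a b := by simp [mul_left, h] }, fun n ↦ (inl_left _ (h n)).symm⟩

end SemidirectProduct

namespace GammaGrp

variable {U : (Matrix (Fin 2) (Fin 2) ℤ)ˣ}

theorem map_inl_eq_one (hU : ((U : Matrix (Fin 2) (Fin 2) ℤ) - 1).det ≠ 0)
    (f : GammaGrp U →* Multiplicative ℤ) (x : Multiplicative (Fin 2 → ℤ)) : f (inl x) = 1 := by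
  let L : (Fin 2 → ℤ) →ₗ[ℤ] ℤ :=
    (AddMonoidHom.mk' (fun y ↦ toAdd (f (inl (ofAdd y)))) fun a b ↦ by
      rw [ofAdd_add, map_mul, map_mul, toAdd_mul]).toIntLinearMap
  have hL : L = 0 := LinearMap.eq_zero_of_map_mulVec_eq hU fun y ↦
    congrArg toAdd (map_inl_aut f (ofAdd 1) (ofAdd y))
  exact congrArg ofAdd (LinearMap.congr_fun hL (toAdd x))

theorem rightHom_map (hU : ((U : Matrix (Fin 2) (Fin 2) ℤ) - 1).det ≠ 0)
    (φ : GammaGrp U →* GammaGrp U) (g : GammaGrp U) :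
    rightHom (φ g) = rightHom (φ (inr (ofAdd 1))) ^ toAdd g.right := by
  have hf : ∀ x, (rightHom.comp φ) (inl x) = 1 := map_inl_eq_one hU _
  rw [← MonoidHom.comp_apply, map_eq_map_inr_right hf]
  exact MonoidHom.apply_mint _ ((rightHom.comp φ).comp inr) g.right

theorem rightHom_map_inr_one_eq_or (hU : ((U : Matrix (Fin 2) (Fin 2) ℤ) - 1).det ≠ 0)
    (φ : GammaGrp U ≃* GammaGrp U) :
    rightHom (φ (inr (ofAdd 1))) = ofAdd 1 ∨ rightHom (φ (inr (ofAdd 1))) = ofAdd (-1) := by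
  obtain ⟨g, hg⟩ := φ.surjective (inr (ofAdd 1))
  have h := congrArg toAdd (rightHom_map hU φ.toMonoidHom g)
  rw [MulEquiv.coe_toMonoidHom, hg, rightHom_inr, toAdd_zpow, toAdd_ofAdd, smul_eq_mul,
    mul_comm] at h
  exact (Int.eq_one_or_neg_one_of_mul_eq_one h.symm).imp (congrArg ofAdd) (congrArg ofAdd)

theorem trace_inv_eq_trace_of_rightHom_map_eq_inv
    (hU : ((U : Matrix (Fin 2) (Fin 2) ℤ) - 1).det ≠ 0)
    (φ : GammaGrp U ≃* GammaGrp U) (hφ : rightHom (φ (inr (ofAdd 1))) = ofAdd (-1)) :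
    ((U⁻¹ : (Matrix (Fin 2) (Fin 2) ℤ)ˣ) : Matrix (Fin 2) (Fin 2) ℤ).trace =
      (U : Matrix (Fin 2) (Fin 2) ℤ).trace := by
  obtain ⟨e, he⟩ := exists_mulEquiv_map_inl φ
    (map_inl_eq_one hU (rightHom.comp φ.toMonoidHom))
    (map_inl_eq_one hU (rightHom.comp φ.symm.toMonoidHom))
  refine (trace_eq_of_mulVec_semiconj
    (AddEquiv.toMultiplicative.symm e).toIntLinearEquiv fun x ↦ ?_).symm
  have h : φ (inl (ofAdd ((U : Matrix (Fin 2) (Fin 2) ℤ) *ᵥ x))) =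
      φ (inr (ofAdd 1) * inl (ofAdd x) * (inr (ofAdd 1))⁻¹) :=
    congrArg φ (by rw [← map_inv]; exact inl_aut (ofAdd (1 : ℤ)) (ofAdd x))
  rw [map_mul, map_mul, map_inv, he, he, mul_inl_mul_inv, ← rightHom_eq_right, hφ] at h
  exact congrArg toAdd (inl_injective h)

end GammaGrp

/-- for `N ∈ GL(2,ℤ)` with `det N = -1` and `tr N ≠ 0`, the group
`Π₂⁻ = ℤ² ⋊_N ℤ` has the `R∞` property. -/
theorem stmt2 (U : (Matrix (Fin 2) (Fin 2) ℤ)ˣ)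
    (hdet : (U : Matrix (Fin 2) (Fin 2) ℤ).det = -1)
    (htr : (U : Matrix (Fin 2) (Fin 2) ℤ).trace ≠ 0)
    (φ : GammaGrp U ≃* GammaGrp U) :
    Cardinal.aleph0 ≤ reidemeisterNumber φ.toMonoidHom := by
  have hU : ((U : Matrix (Fin 2) (Fin 2) ℤ) - 1).det ≠ 0 := by
    rw [det_sub_one_fin_two, hdet]
    omega
  have hφ : rightHom (φ (inr (ofAdd 1))) = ofAdd 1 := by
    refine (GammaGrp.rightHom_map_inr_one_eq_or hU φ).resolve_right fun h ↦ htr ?_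
    have := GammaGrp.trace_inv_eq_trace_of_rightHom_map_eq_inv hU φ h
    rw [coe_units_inv, trace_inv_fin_two_of_det_eq_neg_one hdet] at this
    omega
  refine aleph0_le_reidemeisterNumber_of_comp_eq _ rightHom rightHom_surjective ?_
  ext1 g
  rw [MonoidHom.comp_apply, GammaGrp.rightHom_map hU, MulEquiv.coe_toMonoidHom, hφ,
    ← ofAdd_zsmul, smul_eq_mul, mul_one, ofAdd_toAdd, rightHom_eq_right]
end

section
/- Let A ∈ SL(2,ℤ) with tr A > 2, m ∈ {0, 1}, M = [[−1, m], [0, 1]] with M A M⁻¹ = A⁻¹, and k, k' ∈ ℤ² with (I − M)k = 0 and (A − M)(k' − k) = 0. Then the group Π₃(k,k') has the R_∞ property: for every automorphism φ of Π₃(k,k'), the number of φ-twisted conjugacy classes is infinite. -/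
/-- Generators of the crystallographic group `Π₃(k,k')`. -/
inductive Gen3 | a1 | a2 | t | b

open FreeGroup in
/-- The relators in the presentation of `Π₃(k,k')`:
`[a₁,a₂] = 1`, `t aᵢ t⁻¹ = A(aᵢ)`, `β aᵢ β⁻¹ = M(aᵢ)`, `β² = aᵏ`,
`β t β⁻¹ = a^{k'} t⁻¹`. -/
def relsPi3 (A M : Matrix (Fin 2) (Fin 2) ℤ) (k k' : Fin 2 → ℤ) : Set (FreeGroup Gen3) :=
  { of Gen3.a1 * of Gen3.a2 * (of Gen3.a2 * of Gen3.a1)⁻¹,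
    of Gen3.t * of Gen3.a1 * (of Gen3.t)⁻¹ * (of Gen3.a1 ^ A 0 0 * of Gen3.a2 ^ A 1 0)⁻¹,
    of Gen3.t * of Gen3.a2 * (of Gen3.t)⁻¹ * (of Gen3.a1 ^ A 0 1 * of Gen3.a2 ^ A 1 1)⁻¹,
    of Gen3.b * of Gen3.a1 * (of Gen3.b)⁻¹ * (of Gen3.a1 ^ M 0 0 * of Gen3.a2 ^ M 1 0)⁻¹,
    of Gen3.b * of Gen3.a2 * (of Gen3.b)⁻¹ * (of Gen3.a1 ^ M 0 1 * of Gen3.a2 ^ M 1 1)⁻¹,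
    of Gen3.b * of Gen3.b * (of Gen3.a1 ^ k 0 * of Gen3.a2 ^ k 1)⁻¹,
    of Gen3.b * of Gen3.t * (of Gen3.b)⁻¹ *
      (of Gen3.a1 ^ k' 0 * of Gen3.a2 ^ k' 1 * (of Gen3.t)⁻¹)⁻¹ }

/-- The crystallographic group `Π₃(k,k')` of `Sol`. -/
abbrev Pi3 (A M : Matrix (Fin 2) (Fin 2) ℤ) (k k' : Fin 2 → ℤ) :=
  PresentedGroup (relsPi3 A M k k')

/-!
The map `q` sending `a₁, a₂ ↦ 1`, `t ↦ r 1`, `β ↦ sr 0` maps `Π₃(k,k')` onto the infinite dihedral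
group `D∞ = DihedralGroup 0`. Every surjection `F : Π₃(k,k') → D∞` kills `a₁` and `a₂`: if `F aᵢ`
were a reflection, the relations would put all generators into its centralizer `{1, F aᵢ}`; if both
are rotations `r zᵢ`, the relations `t aᵢ t⁻¹ = A(aᵢ)` make `z` an eigenvector of `Aᵀ` for the
eigenvalue `±1`, which a hyperbolic `A` does not have. Applied to `F = q ∘ φ`, this shows that `φ`
descends to a surjective endomorphism `α : r i ↦ r (u i), sr i ↦ sr (w + u i)` (`u = ±1`) of `D∞`,
so `R(φ) ≥ R(α)`; and the `α`-twisted classes are told apart by the distance `|2i - w|` of an index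
from the fixed point `w / 2`, which is unbounded.
-/

open Function PresentedGroup DihedralGroup

universe u

theorem aleph0_le_reidemeisterNumber_of_invariant {G : Type*} [Group G] {φ : G →* G}
    (J : G → ℕ) (hJ : ∀ g x, J (g * x * (φ g)⁻¹) = J x) (hJ_unbdd : ¬BddAbove (Set.range J)) :
    Cardinal.aleph0 ≤ reidemeisterNumber φ := by
  rw [reidemeisterNumber, Cardinal.aleph0_le_mk_iff, ← not_finite_iff_infinite]
  intro _
  let J' : Quot (twistedConj φ) → ℕ := Quot.lift J fun x _ ⟨g, h⟩ => h ▸ (hJ g x).symm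
  obtain ⟨b, hb⟩ := (Set.finite_range J').bddAbove
  exact hJ_unbdd ⟨b, Set.range_subset_iff.2 fun x => hb (Set.mem_range_self (Quot.mk _ x))⟩

theorem reidemeisterNumber_le_of_surjective {G H : Type u} [Group G] [Group H] {φ : G →* G}
    {α : H →* H} {q : G →* H} (hq : Surjective q) (h : q.comp φ = α.comp q) :
    reidemeisterNumber α ≤ reidemeisterNumber φ := by
  refine Cardinal.mk_le_of_surjective (f := Quot.map q fun x y ⟨g, hg⟩ => ⟨q g, ?_⟩) ?_
  · rw [hg, map_mul, map_mul, map_inv, ← MonoidHom.comp_apply, h, MonoidHom.comp_apply]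
  · rintro ⟨y⟩
    obtain ⟨x, rfl⟩ := hq y
    exact ⟨Quot.mk _ x, rfl⟩

theorem PresentedGroup.closure_range_comp_of {α H : Type*} [Group H] {rels : Set (FreeGroup α)}
    {F : PresentedGroup rels →* H} (hF : Surjective F) :
    Subgroup.closure (Set.range (F ∘ of)) = ⊤ := by
  rw [Set.range_comp, ← MonoidHom.map_closure, closure_range_of, ← MonoidHom.range_eq_map,
    MonoidHom.range_eq_top.2 hF]

open Matrix in
theorem Matrix.eq_zero_of_vecMul_map_eq_smul {R : Type*} [CommRing R] [IsDomain R] [CharZero R]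
    {A : Matrix (Fin 2) (Fin 2) ℤ} (hdet : A.det = 1) (htr : 2 < A.trace) {e : R}
    (he : e = 1 ∨ e = -1) {z : Fin 2 → R} (h : z ᵥ* A.map Int.cast = e • z) : z = 0 := by
  have h₀ := congrFun h 0
  have h₁ := congrFun h 1
  simp only [vecMul, dotProduct, Fin.sum_univ_two, map_apply, Pi.smul_apply, smul_eq_mul] at h₀ h₁
  rw [det_fin_two] at hdet
  rw [trace_fin_two] at htr
  have hdet' : (A 0 0 * A 1 1 - A 0 1 * A 1 0 : R) = 1 := by exact_mod_cast hdet
  have he2 : e * e = 1 := by rcases he with rfl | rfl <;> ring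
  -- Cayley–Hamilton gives `(e² - e tr A + det A) z = 0`, and here `e² - e tr A + det A = 2 ∓ tr A`.
  have hc : 2 - e * (A 0 0 + A 1 1 : R) ≠ 0 := by
    rcases he with rfl | rfl
    · rw [one_mul]
      exact_mod_cast (by omega : (2 - (A 0 0 + A 1 1) : ℤ) ≠ 0)
    · rw [neg_one_mul, sub_neg_eq_add]
      exact_mod_cast (by omega : (2 + (A 0 0 + A 1 1) : ℤ) ≠ 0)
  ext j
  fin_cases j <;> simp only [Fin.zero_eta, Fin.mk_one, Pi.zero_apply] <;>
    refine (mul_eq_zero.1 (?_ : (2 - e * (A 0 0 + A 1 1 : R)) * _ = 0)).resolve_left hc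
  · linear_combination ((A 1 1 : R) - e) * h₀ - (A 1 0 : R) * h₁ - z 0 * he2 - z 0 * hdet'
  · linear_combination ((A 0 0 : R) - e) * h₁ - (A 0 1 : R) * h₀ - z 1 * he2 - z 1 * hdet'

namespace DihedralGroup

variable {n : ℕ}

def affineEnd (u w : ZMod n) : DihedralGroup n →* DihedralGroup n where
  toFun
    | r i => r (u * i)
    | sr i => sr (w + u * i)
  map_one' := by rw [one_def]; simp
  map_mul' := by rintro (i | i) (j | j) <;> simp <;> ring

@[simp] lemma affineEnd_r (u w i : ZMod n) : affineEnd u w (r i) = r (u * i) := rfl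

@[simp] lemma affineEnd_sr (u w i : ZMod n) : affineEnd u w (sr i) = sr (w + u * i) := rfl

lemma isUnit_of_surjective_affineEnd {u w : ZMod n} (h : Surjective (affineEnd u w)) :
    IsUnit u := by
  obtain ⟨i | i, hi⟩ := h (r 1)
  · exact IsUnit.of_mul_eq_one i (by simpa using hi)
  · simp at hi

lemma exists_conj_r_eq (d : DihedralGroup n) :
    ∃ e : ZMod n, (e = 1 ∨ e = -1) ∧ ∀ i, d * r i * d⁻¹ = r (e * i) := by
  rcases d with p | p
  · exact ⟨1, Or.inl rfl, fun i => by simp⟩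
  · exact ⟨-1, Or.inr rfl, fun i => by simp⟩

lemma commute_of_commute_conj_sr {d : DihedralGroup 0} {v : ZMod 0}
    (h : Commute (d * sr v * d⁻¹) (sr v)) : Commute d (sr v) := by
  rcases d with p | p <;> simp [Commute, SemiconjBy] at h ⊢ <;> grind

lemma closure_ne_top_of_forall_commute_conj_sr {s : Set (DihedralGroup 0)} (v : ZMod 0)
    (hs : ∀ d ∈ s, Commute (d * sr v * d⁻¹) (sr v)) : Subgroup.closure s ≠ ⊤ := by
  intro htop
  have hle : Subgroup.closure s ≤ Subgroup.centralizer {sr v} :=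
    (Subgroup.closure_le _).2 fun d hd =>
      Subgroup.mem_centralizer_singleton_iff.2 (commute_of_commute_conj_sr (hs d hd)).eq
  have := hle (htop ▸ Subgroup.mem_top (sr (v + 1)))
  simp [Subgroup.mem_centralizer_singleton_iff] at this

lemma closure_singleton_ne_top (g : DihedralGroup 0) : Subgroup.closure {g} ≠ ⊤ := fun h =>
  not_isCyclic zero_ne_one <|
    isCyclic_iff_exists_zpowers_eq_top.2 ⟨g, by rwa [Subgroup.zpowers_eq_closure]⟩

lemma exists_eq_r_and_eq_sr {X Y : DihedralGroup 0} (hY : Y * Y = 1) (hYX : Y * X * Y⁻¹ = X⁻¹)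
    (hXY : Subgroup.closure {X, Y} = ⊤) : ∃ u w, X = r u ∧ Y = sr w := by
  rcases Y with w | w
  · obtain rfl : w = 0 := by rw [r_mul_r, ← r_zero, r.injEq] at hY; grind
    rw [← one_def, Set.pair_comm, Subgroup.closure_insert_one] at hXY
    exact (closure_singleton_ne_top X hXY).elim
  rcases X with u | u
  · exact ⟨u, w, rfl, rfl⟩
  · obtain rfl : w = u := by simp at hYX; grind
    rw [Set.pair_eq_singleton] at hXY
    exact (closure_singleton_ne_top _ hXY).elim

/-- The factor `1 ± u` makes the invariant vanish on the coset of rotations or of reflections on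
which the twisted classes of `affineEnd u w` are infinite. -/
def reidemeisterInvariant (u w : ZMod 0) : DihedralGroup 0 → ℕ
  | r i => ((1 + u) * (2 * i - w)).val
  | sr i => ((1 - u) * (2 * i - w)).val

lemma reidemeisterInvariant_mul_mul_inv {u : ZMod 0} (hu : u * u = 1) (w : ZMod 0)
    (d x : DihedralGroup 0) :
    reidemeisterInvariant u w (d * x * (affineEnd u w d)⁻¹) = reidemeisterInvariant u w x := by
  have val_eq : ∀ a b : ZMod 0, a = b ∨ a = -b → a.val = b.val := by
    rintro a b (rfl | rfl)
    exacts [rfl, ZMod.val_neg']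
  rcases d with p | p <;> rcases x with i | i <;>
    simp only [reidemeisterInvariant, affineEnd_r, affineEnd_sr, r_mul_r, r_mul_sr, sr_mul_r,
      sr_mul_sr, inv_r, inv_sr] <;>
    apply val_eq
  · exact Or.inl (by linear_combination (-2 * p) * hu)
  · exact Or.inl (by linear_combination (2 * p) * hu)
  · exact Or.inr (by linear_combination (2 * p) * hu)
  · exact Or.inr (by linear_combination (-2 * p) * hu)

lemma aleph0_le_reidemeisterNumber_affineEnd {u : ZMod 0} (hu : IsUnit u) (w : ZMod 0) :
    Cardinal.aleph0 ≤ reidemeisterNumber (affineEnd u w) := by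
  -- `ZMod 0` is `ℤ` by definition: this is used by `Int.isUnit_iff` and by the `rfl`s below.
  have hu' : u = 1 ∨ u = -1 := Int.isUnit_iff.mp hu
  refine aleph0_le_reidemeisterNumber_of_invariant _
    (reidemeisterInvariant_mul_mul_inv (by rcases hu' with rfl | rfl <;> ring) w) ?_
  rintro ⟨b, hb⟩
  obtain ⟨w, rfl⟩ := ZMod.intCast_surjective w
  obtain ⟨d, hd⟩ :
      ∃ d, reidemeisterInvariant u w d = (2 * (2 * (b + w.natAbs + 1) - w)).natAbs := by
    rcases hu' with rfl | rfl
    exacts [⟨r (Int.cast (b + w.natAbs + 1)), rfl⟩, ⟨sr (Int.cast (b + w.natAbs + 1)), rfl⟩]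
  have := hb ⟨d, hd⟩
  omega

end DihedralGroup

namespace Pi3

variable {A M : Matrix (Fin 2) (Fin 2) ℤ} {k k' : Fin 2 → ℤ}

theorem a1_commute_a2 : Commute (of Gen3.a1 : Pi3 A M k k') (of Gen3.a2) :=
  mk_eq_mk_of_mul_inv_mem (by simp [relsPi3])

theorem t_conj_a1 : (of Gen3.t : Pi3 A M k k') * of Gen3.a1 * (of Gen3.t)⁻¹ =
    of Gen3.a1 ^ A 0 0 * of Gen3.a2 ^ A 1 0 :=
  mk_eq_mk_of_mul_inv_mem (by simp [relsPi3])

theorem t_conj_a2 : (of Gen3.t : Pi3 A M k k') * of Gen3.a2 * (of Gen3.t)⁻¹ =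
    of Gen3.a1 ^ A 0 1 * of Gen3.a2 ^ A 1 1 :=
  mk_eq_mk_of_mul_inv_mem (by simp [relsPi3])

theorem b_conj_a1 : (of Gen3.b : Pi3 A M k k') * of Gen3.a1 * (of Gen3.b)⁻¹ =
    of Gen3.a1 ^ M 0 0 * of Gen3.a2 ^ M 1 0 :=
  mk_eq_mk_of_mul_inv_mem (by simp [relsPi3])

theorem b_conj_a2 : (of Gen3.b : Pi3 A M k k') * of Gen3.a2 * (of Gen3.b)⁻¹ =
    of Gen3.a1 ^ M 0 1 * of Gen3.a2 ^ M 1 1 :=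
  mk_eq_mk_of_mul_inv_mem (by simp [relsPi3])

theorem b_mul_b :
    (of Gen3.b : Pi3 A M k k') * of Gen3.b = of Gen3.a1 ^ k 0 * of Gen3.a2 ^ k 1 :=
  mk_eq_mk_of_mul_inv_mem (by simp [relsPi3])

theorem b_conj_t : (of Gen3.b : Pi3 A M k k') * of Gen3.t * (of Gen3.b)⁻¹ =
    of Gen3.a1 ^ k' 0 * of Gen3.a2 ^ k' 1 * (of Gen3.t)⁻¹ :=
  mk_eq_mk_of_mul_inv_mem (by simp [relsPi3])

def toDihedral : Pi3 A M k k' →* DihedralGroup 0 :=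
  toGroup (f := fun | .a1 => 1 | .a2 => 1 | .t => r 1 | .b => sr 0) (by
    rintro _ (rfl | rfl | rfl | rfl | rfl | rfl | rfl) <;> simp)

@[simp] lemma toDihedral_a1 : toDihedral (of Gen3.a1 : Pi3 A M k k') = 1 := toGroup.of _

@[simp] lemma toDihedral_a2 : toDihedral (of Gen3.a2 : Pi3 A M k k') = 1 := toGroup.of _

@[simp] lemma toDihedral_t : toDihedral (of Gen3.t : Pi3 A M k k') = r 1 := toGroup.of _

@[simp] lemma toDihedral_b : toDihedral (of Gen3.b : Pi3 A M k k') = sr 0 := toGroup.of _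

lemma toDihedral_surjective : Surjective (toDihedral : Pi3 A M k k' →* DihedralGroup 0) := by
  rintro (i | i) <;> obtain ⟨i, rfl⟩ := ZMod.intCast_surjective i
  · exact ⟨of Gen3.t ^ i, by simp⟩
  · exact ⟨of Gen3.b * of Gen3.t ^ i, by simp⟩

variable {F : Pi3 A M k k' →* DihedralGroup 0}

theorem map_ne_sr (hF : Surjective F) {c : Pi3 A M k k'}
    (h₁ : Commute (F c) (F (of Gen3.a1))) (h₂ : Commute (F c) (F (of Gen3.a2)))
    (ht : ∃ i j : ℤ, of Gen3.t * c * (of Gen3.t)⁻¹ = of Gen3.a1 ^ i * of Gen3.a2 ^ j)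
    (hb : ∃ i j : ℤ, of Gen3.b * c * (of Gen3.b)⁻¹ = of Gen3.a1 ^ i * of Gen3.a2 ^ j)
    (v : ZMod 0) : F c ≠ sr v := by
  intro hcv
  have hconj : ∀ g, (∃ i j : ℤ, g * c * g⁻¹ = of Gen3.a1 ^ i * of Gen3.a2 ^ j) →
      Commute (F g * F c * (F g)⁻¹) (F c) := by
    rintro g ⟨i, j, hg⟩
    rw [← map_inv, ← map_mul, ← map_mul, hg, map_mul, map_zpow, map_zpow]
    exact ((h₁.zpow_right i).mul_right (h₂.zpow_right j)).symm
  refine closure_ne_top_of_forall_commute_conj_sr v ?_ (closure_range_comp_of hF)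
  rw [← hcv]
  rintro _ ⟨g, rfl⟩
  cases g
  · rw [comp_apply, h₁.symm.mul_inv_cancel]
  · rw [comp_apply, h₂.symm.mul_inv_cancel]
  · exact hconj _ ht
  · exact hconj _ hb

theorem map_a1_eq_one_and_map_a2_eq_one (hdet : A.det = 1) (htr : 2 < A.trace)
    (hF : Surjective F) : F (of Gen3.a1) = 1 ∧ F (of Gen3.a2) = 1 := by
  have h₁₂ : Commute (F (of Gen3.a1)) (F (of Gen3.a2)) := a1_commute_a2.map F
  have exists_eq_r : ∀ c, (∀ v, F c ≠ sr v) → ∃ z, F c = r z := fun c hc => by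
    rcases h : F c with z | v
    exacts [⟨z, rfl⟩, (hc v h).elim]
  obtain ⟨z₁, hz₁⟩ := exists_eq_r _ <|
    map_ne_sr hF (.refl _) h₁₂ ⟨A 0 0, A 1 0, t_conj_a1⟩ ⟨M 0 0, M 1 0, b_conj_a1⟩
  obtain ⟨z₂, hz₂⟩ := exists_eq_r _ <|
    map_ne_sr hF h₁₂.symm (.refl _) ⟨A 0 1, A 1 1, t_conj_a2⟩ ⟨M 0 1, M 1 1, b_conj_a2⟩
  obtain ⟨e, he, hconj⟩ := exists_conj_r_eq (F (of Gen3.t))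
  have h₁ := congrArg F t_conj_a1
  have h₂ := congrArg F t_conj_a2
  simp only [map_mul, map_inv, map_zpow, hz₁, hz₂, hconj, r_zpow, r_mul_r, r.injEq] at h₁ h₂
  have hz : ![z₁, z₂] = 0 := Matrix.eq_zero_of_vecMul_map_eq_smul hdet htr he (by
    ext j
    fin_cases j <;> simp [Matrix.vecMul, dotProduct, Fin.sum_univ_two]
    exacts [h₁.symm, h₂.symm])
  rw [hz₁, hz₂, show z₁ = 0 from congrFun hz 0, show z₂ = 0 from congrFun hz 1, r_zero]
  exact ⟨rfl, rfl⟩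

theorem exists_eq_affineEnd_comp (hdet : A.det = 1) (htr : 2 < A.trace) (hF : Surjective F) :
    ∃ u w, IsUnit u ∧ F = (affineEnd u w).comp toDihedral := by
  obtain ⟨ha₁, ha₂⟩ := map_a1_eq_one_and_map_a2_eq_one hdet htr hF
  have hbb := congrArg F b_mul_b
  have hbt := congrArg F b_conj_t
  simp only [map_mul, map_inv, map_zpow, ha₁, ha₂, one_zpow, one_mul] at hbb hbt
  have hgen : Subgroup.closure {F (of Gen3.t), F (of Gen3.b)} = ⊤ := by
    refine eq_top_iff.2 ((closure_range_comp_of hF).ge.trans (Subgroup.closure_le _ |>.2 ?_))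
    rintro _ ⟨g, rfl⟩
    cases g
    · simp [ha₁]
    · simp [ha₂]
    · exact Subgroup.subset_closure (Set.mem_insert _ _)
    · exact Subgroup.subset_closure (Set.mem_insert_of_mem _ rfl)
  obtain ⟨u, w, hu, hw⟩ := exists_eq_r_and_eq_sr hbb hbt hgen
  have hFu : F = (affineEnd u w).comp toDihedral :=
    PresentedGroup.ext fun g => by cases g <;> simp [ha₁, ha₂, hu, hw]
  exact ⟨u, w, isUnit_of_surjective_affineEnd (.of_comp (g := toDihedral) (hFu ▸ hF)), hFu⟩

end Pi3

theorem stmt12_general (A : Matrix (Fin 2) (Fin 2) ℤ) (hdet : A.det = 1) (htr : 2 < A.trace)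
    (m : ℤ)
    (k k' : Fin 2 → ℤ) :
    ∀ φ : Pi3 A !![(-1 : ℤ), m; 0, 1] k k' ≃* Pi3 A !![(-1 : ℤ), m; 0, 1] k k',
      Cardinal.aleph0 ≤ reidemeisterNumber φ.toMonoidHom := by
  intro φ
  obtain ⟨u, w, hu, hF⟩ := Pi3.exists_eq_affineEnd_comp hdet htr
    (F := Pi3.toDihedral.comp φ.toMonoidHom) (Pi3.toDihedral_surjective.comp φ.surjective)
  calc Cardinal.aleph0 ≤ reidemeisterNumber (affineEnd u w) :=
        aleph0_le_reidemeisterNumber_affineEnd hu w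
    _ ≤ reidemeisterNumber φ.toMonoidHom :=
        reidemeisterNumber_le_of_surjective Pi3.toDihedral_surjective hF

/-- the group `Π₃(k,k')` has the `R∞` property. -/
theorem stmt12 (A : Matrix (Fin 2) (Fin 2) ℤ) (hdet : A.det = 1) (htr : 2 < A.trace)
    (m : ℤ) (hm : m = 0 ∨ m = 1)
    (hMA : !![(-1 : ℤ), m; 0, 1] * A * (!![(-1 : ℤ), m; 0, 1])⁻¹ = A⁻¹)
    (k k' : Fin 2 → ℤ)
    (hk : (1 - !![(-1 : ℤ), m; 0, 1]).mulVec k = 0)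
    (hk' : (A - !![(-1 : ℤ), m; 0, 1]).mulVec (k' - k) = 0) :
    ∀ φ : Pi3 A !![(-1 : ℤ), m; 0, 1] k k' ≃* Pi3 A !![(-1 : ℤ), m; 0, 1] k k',
      Cardinal.aleph0 ≤ reidemeisterNumber φ.toMonoidHom :=
  stmt12_general A hdet htr m k k'
end
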